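/- arXiv:2509.02103 — 2 statements merged into one kernel-verified Lean document; each statement's English description precedes it below -/
import Mathlib

section
/- Let v ∈ [0,1] and N ∈ ℕ, and define f_θ(v,N) = 1 if v = 0 or N = 0; f_θ(v,N) = v^{θ-1}(1-v)^{N-θ}/B(θ, N-θ+1) if v ≠ 0 and N > θ; and f_θ(v,N) = N v^{N-1} otherwise. Then the function θ ↦ f_θ(v,N) is upper semi-continuous on (0, ∞). -/
open MeasureTheory Real Set

noncomputable def betaFun (a b : ℝ) : ℝ := ∫ v in (0:ℝ)..1, v ^ (a - 1) * (1 - v) ^ (b - 1)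

/-- Extended Beta-density parametrization `f_θ(v, N)`. -/
noncomputable def fExt (θ : ℝ) (v : ℝ) (N : ℕ) : ℝ :=
  if v = 0 ∨ N = 0 then 1
  else if θ < (N : ℝ) then v ^ (θ - 1) * (1 - v) ^ ((N:ℝ) - θ) / betaFun θ ((N:ℝ) - θ + 1)
  else (N : ℝ) * v ^ ((N:ℝ) - 1)

/-!
For `0 < v < 1` the Beta density `θ ↦ v^(θ-1) (1-v)^(N-θ) / B(θ, N-θ+1)` is continuous in `θ`
on `(0, N+1)`, since `B = Γ Γ / Γ` there, and at `θ = N` it equals `N v^(N-1)` because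
`B(N, 1) = 1/N`. Hence `f_θ(v, N)` is this density evaluated at `min θ N`, a continuous function
of `θ`. For `v = 1` the density vanishes for `θ < N`, so `f_θ(1, N)` is `N` times the indicator of
the closed set `[N, ∞)`, which is upper semicontinuous.
-/

lemma betaFun_eq_Gamma {a b : ℝ} (ha : 0 < a) (hb : 0 < b) :
    betaFun a b = Gamma a * Gamma b / Gamma (a + b) := by
  have hcast : Complex.betaIntegral a b = (betaFun a b : ℂ) := by
    rw [Complex.betaIntegral, betaFun, ← intervalIntegral.integral_ofReal]
    refine intervalIntegral.integral_congr fun x hx => ?_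
    rw [uIcc_of_le zero_le_one] at hx
    simp only [Complex.ofReal_mul, Complex.ofReal_cpow hx.1, Complex.ofReal_cpow (sub_nonneg.2 hx.2)]
    push_cast
    ring
  have key := Complex.Gamma_mul_Gamma_eq_betaIntegral (s := a) (t := b)
    (by simpa using ha) (by simpa using hb)
  rw [hcast, Complex.Gamma_ofReal, Complex.Gamma_ofReal, ← Complex.ofReal_add,
    Complex.Gamma_ofReal] at key
  have key' : Gamma a * Gamma b = Gamma (a + b) * betaFun a b := mod_cast key
  rw [key', mul_div_cancel_left₀ _ (Gamma_pos_of_pos (add_pos ha hb)).ne']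

lemma betaFun_pos {a b : ℝ} (ha : 0 < a) (hb : 0 < b) : 0 < betaFun a b := by
  rw [betaFun_eq_Gamma ha hb]
  exact div_pos (mul_pos (Gamma_pos_of_pos ha) (Gamma_pos_of_pos hb))
    (Gamma_pos_of_pos (add_pos ha hb))

lemma betaFun_one_right {a : ℝ} (ha : 0 < a) : betaFun a 1 = a⁻¹ := by
  rw [betaFun_eq_Gamma ha one_pos, Gamma_one, mul_one, Gamma_add_one ha.ne',
    div_mul_cancel_right₀ (Gamma_pos_of_pos ha).ne']

lemma continuousOn_betaFun :
    ContinuousOn (Function.uncurry betaFun) (Ioi 0 ×ˢ Ioi 0) := by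
  have hΓ : ∀ x : ℝ, 0 < x → ContinuousAt Gamma x := fun x hx =>
    (differentiableAt_Gamma fun m => by linarith [(Nat.cast_nonneg m : (0:ℝ) ≤ m)]).continuousAt
  refine ContinuousOn.congr (f := fun p : ℝ × ℝ => Gamma p.1 * Gamma p.2 / Gamma (p.1 + p.2))
    (fun p ⟨ha, hb⟩ => ?_) fun p ⟨ha, hb⟩ => betaFun_eq_Gamma ha hb
  have hab : (0:ℝ) < p.1 + p.2 := add_pos ha hb
  refine ContinuousAt.continuousWithinAt (ContinuousAt.div ?_ ?_ (Gamma_pos_of_pos hab).ne')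
  · exact ((hΓ _ ha).comp continuousAt_fst).mul ((hΓ _ hb).comp continuousAt_snd)
  · exact (hΓ _ hab).comp (f := fun q : ℝ × ℝ => q.1 + q.2) (by fun_prop)

noncomputable def betaDensity (N : ℕ) (v θ : ℝ) : ℝ :=
  v ^ (θ - 1) * (1 - v) ^ ((N:ℝ) - θ) / betaFun θ ((N:ℝ) - θ + 1)

lemma continuousOn_betaDensity {N : ℕ} {v : ℝ} (hv0 : 0 < v) (hv1 : v < 1) :
    ContinuousOn (betaDensity N v) (Ioo 0 (N + 1)) := by
  intro θ ⟨hθ0, hθN⟩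
  have hb : (0:ℝ) < N - θ + 1 := by linarith
  have hmaps : MapsTo (fun x : ℝ => (x, (N:ℝ) - x + 1)) (Ioo 0 (N + 1)) (Ioi 0 ×ˢ Ioi 0) :=
    fun x hx => ⟨hx.1, show (0:ℝ) < N - x + 1 by linarith [hx.2]⟩
  have hB : ContinuousWithinAt (fun θ : ℝ => betaFun θ (N - θ + 1)) (Ioo 0 (N + 1)) θ :=
    (continuousOn_betaFun.comp (by fun_prop) hmaps) θ ⟨hθ0, hθN⟩
  refine ContinuousWithinAt.div ?_ hB (betaFun_pos hθ0 hb).ne'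
  exact (ContinuousAt.mul (continuousAt_const.rpow (by fun_prop) (.inl hv0.ne'))
    (continuousAt_const.rpow (by fun_prop) (.inl (by linarith)))).continuousWithinAt

lemma fExt_eq_betaDensity_min {θ v : ℝ} {N : ℕ} (hv : v ≠ 0) (hN : N ≠ 0) :
    fExt θ v N = betaDensity N v (min θ N) := by
  by_cases hθ : θ < N
  · simp [fExt, betaDensity, hv, hN, hθ, min_eq_left hθ.le]
  · have hNpos : (0:ℝ) < N := by exact_mod_cast Nat.pos_of_ne_zero hN
    simp [fExt, betaDensity, hv, hN, hθ, min_eq_right (not_lt.1 hθ), betaFun_one_right hNpos,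
      mul_comm]

lemma fExt_one_eq_indicator {N : ℕ} (hN : N ≠ 0) :
    (fun θ => fExt θ 1 N) = (Ici (N:ℝ)).indicator fun _ => (N:ℝ) := by
  funext θ
  by_cases hθ : θ < N
  · simp [fExt, hN, hθ, zero_rpow (sub_pos.2 hθ).ne']
  · simp [fExt, hN, hθ, not_lt.1 hθ]

theorem upperSemicontinuousOn_fExt (v : ℝ) (hv : v ∈ Set.Icc (0:ℝ) 1) (N : ℕ) :
    UpperSemicontinuousOn (fun θ : ℝ => fExt θ v N) (Set.Ioi (0:ℝ)) := by
  by_cases hdeg : v = 0 ∨ N = 0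
  · simpa [fExt, hdeg] using upperSemicontinuousOn_const
  push Not at hdeg
  obtain ⟨hv0, hN⟩ := hdeg
  have hNpos : (0:ℝ) < N := by exact_mod_cast Nat.pos_of_ne_zero hN
  rcases hv.2.lt_or_eq with hv1 | rfl
  · have hmin : MapsTo (fun θ : ℝ => min θ N) (Ioi 0) (Ioo 0 (N + 1)) := fun θ hθ =>
      ⟨lt_min hθ hNpos, (min_le_right _ _).trans_lt (lt_add_one _)⟩
    refine ContinuousOn.upperSemicontinuousOn ?_
    exact ((continuousOn_betaDensity (lt_of_le_of_ne hv.1 (Ne.symm hv0)) hv1).comp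
      (by fun_prop) hmin).congr fun θ _ => fExt_eq_betaDensity_min hv0 hN
  · rw [fExt_one_eq_indicator hN]
    exact (isClosed_Ici.upperSemicontinuous_indicator hNpos.le).upperSemicontinuousOn _
end

section
/- Fix θ₀ > 0 and an integer N with N > θ₀. Define for θ ∈ (0, N] the function ℓ_N(θ) = (θ−1)Ψ(θ₀) + (N−θ)Ψ(N−θ₀+1) − log Γ(θ) − log Γ(N−θ+1) + log Γ(N+1) − (N−1)Ψ(N+1). Then ℓ_N is strictly concave on (0, N] and its derivative vanishes at θ = θ₀; consequently θ₀ is the unique maximizer of ℓ_N on (0, N]. -/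
/-!
`ℓ_N` is an affine function of `θ` minus `log Γ(θ) + log Γ(N + 1 - θ)`. Since
`log Γ(x) = log Γ(x + 1) - log x`, the convexity of `log Γ` (Bohr–Mollerup) and the strict
concavity of `log` make `log Γ` strictly convex on `(0, ∞)`, so `ℓ_N` is strictly concave on
`(0, N + 1)`. The constants `Ψ(θ₀)` and `Ψ(N - θ₀ + 1)` are exactly those making `θ₀` a critical
point, and a critical point of a strictly concave function is its strict maximum.
-/

open Real Set

noncomputable def digamma (z : ℝ) : ℝ := deriv (fun x => Real.log (Real.Gamma x)) z

theorem StrictConcaveOn.lt_of_hasDerivAt_eq_zero {S : Set ℝ} {f : ℝ → ℝ} {x x₀ : ℝ}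
    (hf : StrictConcaveOn ℝ S f) (hx : x ∈ S) (hx₀ : x₀ ∈ S) (hf₀ : HasDerivAt f 0 x₀)
    (hne : x ≠ x₀) : f x < f x₀ := by
  rcases hne.lt_or_gt with hlt | hgt
  · exact (slope_pos_iff_of_le hlt.le).mp (hf.lt_slope_of_hasDerivAt hx hx₀ hlt hf₀)
  · exact (slope_neg_iff_of_le hgt.le).mp (hf.slope_lt_of_hasDerivAt hx₀ hx hgt hf₀)

theorem Real.strictConvexOn_log_Gamma : StrictConvexOn ℝ (Ioi 0) (log ∘ Gamma) := by
  have hshift : ConvexOn ℝ (Ioi 0) fun x => log (Gamma (x + 1)) :=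
    (convexOn_log_Gamma.translate_left 1).subset (fun x (hx : 0 < x) => by simp; linarith)
      (convex_Ioi 0)
  refine (hshift.sub_strictConcaveOn strictConcaveOn_log_Ioi).congr fun x (hx : 0 < x) => ?_
  simp [Gamma_add_one hx.ne', log_mul hx.ne' (Gamma_pos_of_pos hx).ne']

theorem Real.convexOn_log_Gamma_sub (c : ℝ) : ConvexOn ℝ (Iio c) fun x => log (Gamma (c - x)) :=
  (convexOn_log_Gamma.comp_affineMap (AffineMap.const ℝ ℝ c - AffineMap.id ℝ ℝ)).subset
    (fun x (hx : x < c) => by simpa using hx) (convex_Iio c)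

theorem hasDerivAt_log_Gamma {x : ℝ} (hx : 0 < x) :
    HasDerivAt (fun x => log (Gamma x)) (digamma x) x := by
  have hx' : ∀ m : ℕ, x ≠ -m := fun m => (neg_nonpos.2 m.cast_nonneg).trans_lt hx |>.ne'
  exact ((differentiableAt_Gamma hx').log (Gamma_ne_zero hx')).hasDerivAt

/-- The paper's `ℓ_N`, with `N` allowed to be any real number. -/
noncomputable def ellN (θ₀ N θ : ℝ) : ℝ :=
  (θ - 1) * digamma θ₀ + (N - θ) * digamma (N - θ₀ + 1) - log (Gamma θ) - log (Gamma (N - θ + 1))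
    + log (Gamma (N + 1)) - (N - 1) * digamma (N + 1)

theorem strictConcaveOn_ellN (θ₀ N : ℝ) : StrictConcaveOn ℝ (Ioo 0 (N + 1)) (ellN θ₀ N) := by
  have hlogGamma : StrictConvexOn ℝ (Ioo 0 (N + 1))
      fun θ => log (Gamma θ) + log (Gamma (N + 1 - θ)) :=
    (strictConvexOn_log_Gamma.subset Ioo_subset_Ioi_self (convex_Ioo _ _)).add_convexOn
      ((convexOn_log_Gamma_sub (N + 1)).subset Ioo_subset_Iio_self (convex_Ioo _ _))
  have haffine : ConcaveOn ℝ (Ioo 0 (N + 1)) fun θ =>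
      (digamma θ₀ - digamma (N - θ₀ + 1)) * θ + (N * digamma (N - θ₀ + 1) - digamma θ₀
        + log (Gamma (N + 1)) - (N - 1) * digamma (N + 1)) :=
    ((LinearMap.mul ℝ ℝ (digamma θ₀ - digamma (N - θ₀ + 1))).concaveOn (convex_Ioo _ _)).add_const _
  refine (haffine.sub_strictConvexOn hlogGamma).congr fun θ _ => ?_
  simp only [ellN, Pi.sub_apply, add_sub_right_comm N 1 θ]
  ring

theorem hasDerivAt_ellN {θ₀ N θ : ℝ} (hθ : 0 < θ) (hθN : θ < N + 1) :
    HasDerivAt (ellN θ₀ N)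
      (digamma θ₀ - digamma (N - θ₀ + 1) - digamma θ + digamma (N - θ + 1)) θ := by
  have hreflect : HasDerivAt (fun θ => log (Gamma (N - θ + 1))) (digamma (N - θ + 1) * -1) θ :=
    (hasDerivAt_log_Gamma (by linarith)).comp θ (((hasDerivAt_id θ).const_sub N).add_const 1)
  have h := (((((hasDerivAt_id θ).sub_const 1).mul_const (digamma θ₀)).add
    (((hasDerivAt_id θ).const_sub N).mul_const (digamma (N - θ₀ + 1)))).sub
    (hasDerivAt_log_Gamma hθ)).sub hreflect |>.add_const (log (Gamma (N + 1)))
    |>.sub_const ((N - 1) * digamma (N + 1))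
  exact h.congr_deriv (by ring)

theorem hasDerivAt_ellN_self {θ₀ N : ℝ} (hθ₀ : 0 < θ₀) (hθ₀N : θ₀ < N + 1) :
    HasDerivAt (ellN θ₀ N) 0 θ₀ := by
  simpa using hasDerivAt_ellN (θ₀ := θ₀) hθ₀ hθ₀N

theorem ellN_strictConcave_max (θ₀ : ℝ) (hθ₀ : 0 < θ₀) (N : ℕ) (hN : θ₀ < (N : ℝ)) :
    StrictConcaveOn ℝ (Set.Ioc (0:ℝ) (N:ℝ))
      (fun θ : ℝ => (θ - 1) * digamma θ₀ + ((N:ℝ) - θ) * digamma ((N:ℝ) - θ₀ + 1)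
        - Real.log (Real.Gamma θ) - Real.log (Real.Gamma ((N:ℝ) - θ + 1))
        + Real.log (Real.Gamma ((N:ℝ) + 1)) - ((N:ℝ) - 1) * digamma ((N:ℝ) + 1)) ∧
    deriv (fun θ : ℝ => (θ - 1) * digamma θ₀ + ((N:ℝ) - θ) * digamma ((N:ℝ) - θ₀ + 1)
        - Real.log (Real.Gamma θ) - Real.log (Real.Gamma ((N:ℝ) - θ + 1))
        + Real.log (Real.Gamma ((N:ℝ) + 1)) - ((N:ℝ) - 1) * digamma ((N:ℝ) + 1)) θ₀ = 0 ∧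
    ∀ θ ∈ Set.Ioc (0:ℝ) (N:ℝ), θ ≠ θ₀ →
      ((θ - 1) * digamma θ₀ + ((N:ℝ) - θ) * digamma ((N:ℝ) - θ₀ + 1)
        - Real.log (Real.Gamma θ) - Real.log (Real.Gamma ((N:ℝ) - θ + 1))
        + Real.log (Real.Gamma ((N:ℝ) + 1)) - ((N:ℝ) - 1) * digamma ((N:ℝ) + 1))
      < ((θ₀ - 1) * digamma θ₀ + ((N:ℝ) - θ₀) * digamma ((N:ℝ) - θ₀ + 1)
        - Real.log (Real.Gamma θ₀) - Real.log (Real.Gamma ((N:ℝ) - θ₀ + 1))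
        + Real.log (Real.Gamma ((N:ℝ) + 1)) - ((N:ℝ) - 1) * digamma ((N:ℝ) + 1)) := by
  have hconc : StrictConcaveOn ℝ (Ioc 0 (N : ℝ)) (ellN θ₀ N) :=
    (strictConcaveOn_ellN θ₀ N).subset (Ioc_subset_Ioo_right (lt_add_one _)) (convex_Ioc _ _)
  have hcrit : HasDerivAt (ellN θ₀ N) 0 θ₀ := hasDerivAt_ellN_self hθ₀ (by linarith)
  exact ⟨hconc, hcrit.deriv,
    fun θ hθ hne => hconc.lt_of_hasDerivAt_eq_zero hθ ⟨hθ₀, hN.le⟩ hcrit hne⟩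
end
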